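/- In any finite-state image-finite pLTS, the Kantorovich lifting of the logical state metric is dominated by the logical distribution metric: K(d^L)(Δ₁,Δ₂) ≤ sup_{ψ} |⟦ψ⟧(Δ₁) − ⟦ψ⟧(Δ₂)| for all distributions Δ₁, Δ₂, where d^L(s,t) = sup_φ |⟦φ⟧(s) − ⟦φ⟧(t)| ranges over state formulae and ψ ranges over distribution formulae of the metric HML. -/
import Mathlib


open scoped BigOperators

/-- A (full) probability distribution over a finite set `S`. -/
def IsDist {S : Type} [Fintype S] (Δ : S → ℝ) : Prop :=
  (∀ s, 0 ≤ Δ s) ∧ ∑ s, Δ s = 1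

/-- A matching (coupling) for a pair of distributions. -/
def IsMatching {S : Type} [Fintype S] (ω : S × S → ℝ) (Δ Θ : S → ℝ) : Prop :=
  IsDist ω ∧ (∀ s, ∑ t, ω (s, t) = Δ s) ∧ (∀ t, ∑ s, ω (s, t) = Θ t)

/-- The Kantorovich lifting of `d` (primal formulation, via matchings). -/
noncomputable def Kan {S : Type} [Fintype S] (d : S → S → ℝ) (Δ Θ : S → ℝ) : ℝ :=
  sInf {r | ∃ ω : S × S → ℝ, IsMatching ω Δ Θ ∧ r = ∑ p : S × S, d p.1 p.2 * ω p}

/-- The Kantorovich lifting of `d` (dual linear-programming formulation). -/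
noncomputable def KanD {S : Type} [Fintype S] (d : S → S → ℝ) (Δ Θ : S → ℝ) : ℝ :=
  sSup {r | ∃ x : S → ℝ, (∀ s, 0 ≤ x s ∧ x s ≤ 1) ∧ (∀ s t, x s - x t ≤ d s t) ∧
    r = ∑ s, (Δ s - Θ s) * x s}

/-- `d` is a pseudometric. -/
def IsPseudometric {X : Type*} (d : X → X → ℝ) : Prop :=
  (∀ x, d x x = 0) ∧ (∀ x y, d x y = d y x) ∧ ∀ x y z, d x z ≤ d x y + d y z

/-- `d` is `1`-bounded (takes values in `[0,1]`). -/
def Bounded1 {X : Type*} (d : X → X → ℝ) : Prop := ∀ x y, 0 ≤ d x y ∧ d x y ≤ 1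

open Classical in
/-- Infimum of a set of reals with the convention `inf ∅ = 1`. -/
noncomputable def inf1 (s : Set ℝ) : ℝ := if s.Nonempty then sInf s else 1

open Classical in
/-- Supremum of a set of reals with the convention `sup ∅ = 0`. -/
noncomputable def sup0 (s : Set ℝ) : ℝ := if s.Nonempty then sSup s else 0

/-- The Hausdorff lifting of a `1`-bounded metric to subsets. -/
noncomputable def hausd {X : Type*} (d : X → X → ℝ) (P Q : Set X) : ℝ :=
  max (sup0 {r | ∃ x ∈ P, r = inf1 {r' | ∃ y ∈ Q, r' = d x y}})
      (sup0 {r | ∃ y ∈ Q, r = inf1 {r' | ∃ x ∈ P, r' = d x y}})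

/-- A probabilistic labelled transition system. -/
structure PLTS (S : Type) (A : Type) where
  trans : S → A → (S → ℝ) → Prop

/-- The set of `a`-successor distributions of state `s`. -/
def der {S A : Type} (T : PLTS S A) (s : S) (a : A) : Set (S → ℝ) := {Δ | T.trans s a Δ}

/-- Image-finiteness of a pLTS. -/
def ImageFinite {S A : Type} (T : PLTS S A) : Prop := ∀ s a, (der T s a).Finite

/-- Every transition target is a (full) distribution. -/
def WellFormed {S A : Type} [Fintype S] (T : PLTS S A) : Prop :=
  ∀ s a Δ, T.trans s a Δ → IsDist Δ

/-- `d` is a state-based bisimulation metric. -/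
def IsSBM {S A : Type} [Fintype S] (T : PLTS S A) (d : S → S → ℝ) : Prop :=
  IsPseudometric d ∧ Bounded1 d ∧
  ∀ s t (ε : ℝ), 0 ≤ ε → ε < 1 → d s t ≤ ε →
    ∀ a Δ, T.trans s a Δ → ∃ Δ', T.trans t a Δ' ∧ Kan d Δ Δ' ≤ ε

/-- The unit interval `[0,1]` as a type of probabilities. -/
abbrev UI : Type := { p : ℝ // 0 ≤ p ∧ p ≤ 1 }

mutual
  /-- State formulae of the metric HML. -/
  inductive SF (A : Type) : Type where
    | top : SF A
    | neg : SF A → SF A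
    | sub : SF A → UI → SF A
    | and : SF A → SF A → SF A
    | dia : A → DF A → SF A
  /-- Distribution formulae of the metric HML. -/
  inductive DF (A : Type) : Type where
    | sub : DF A → UI → DF A
    | and : DF A → DF A → DF A
    | box : SF A → DF A
end

mutual
  /-- Semantics of state formulae. -/
  noncomputable def semS {S A : Type} [Fintype S] (T : PLTS S A) : SF A → S → ℝ
    | SF.top, _ => 1
    | SF.neg φ, s => 1 - semS T φ s
    | SF.sub φ p, s => max (semS T φ s - p.1) 0
    | SF.and φ₁ φ₂, s => min (semS T φ₁ s) (semS T φ₂ s)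
    | SF.dia a ψ, s => sup0 {r | ∃ Δ, T.trans s a Δ ∧ r = semD T ψ Δ}
  /-- Semantics of distribution formulae. -/
  noncomputable def semD {S A : Type} [Fintype S] (T : PLTS S A) : DF A → (S → ℝ) → ℝ
    | DF.sub ψ p, Δ => max (semD T ψ Δ - p.1) 0
    | DF.and ψ₁ ψ₂, Δ => min (semD T ψ₁ Δ) (semD T ψ₂ Δ)
    | DF.box φ, Δ => ∑ s, Δ s * semS T φ s
end

/-- The logical metric on states induced by state formulae. -/
noncomputable def dLogic {S A : Type} [Fintype S] (T : PLTS S A) : S → S → ℝ :=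
  fun s t => sSup {r | ∃ φ : SF A, r = |semS T φ s - semS T φ t|}

/-- The logical metric on distributions induced by distribution formulae. -/
noncomputable def dDLogic {S A : Type} [Fintype S] (T : PLTS S A) : (S → ℝ) → (S → ℝ) → ℝ :=
  fun Δ Θ => sSup {r | ∃ ψ : DF A, r = |semD T ψ Δ - semD T ψ Θ|}


section Aux

variable {S A : Type} [Fintype S]

mutual
theorem semS_bounds (T : PLTS S A) (hwf : WellFormed T) :
    ∀ (φ : SF A) (s : S), 0 ≤ semS T φ s ∧ semS T φ s ≤ 1
  | SF.top, s => by simp [semS]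
  | SF.neg φ, s => by
      have h := semS_bounds T hwf φ s
      simp only [semS]; constructor <;> linarith [h.1, h.2]
  | SF.sub φ p, s => by
      have h := semS_bounds T hwf φ s
      simp only [semS]
      exact ⟨le_max_right _ _, max_le (by linarith [p.2.1, h.2]) (by norm_num)⟩
  | SF.and φ₁ φ₂, s => by
      have h1 := semS_bounds T hwf φ₁ s
      have h2 := semS_bounds T hwf φ₂ s
      simp only [semS]
      exact ⟨le_min h1.1 h2.1, min_le_of_left_le h1.2⟩
  | SF.dia a ψ, s => by
      simp only [semS, sup0]
      split
      · next hne =>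
        have hub : ∀ r ∈ {r | ∃ Δ, T.trans s a Δ ∧ r = semD T ψ Δ}, r ≤ 1 := by
          rintro r ⟨Δ, hΔ, rfl⟩
          exact (semD_bounds T hwf ψ Δ (hwf _ _ _ hΔ)).2
        refine ⟨?_, Real.sSup_le hub zero_le_one⟩
        obtain ⟨r, Δ, hΔ, rfl⟩ := hne
        exact le_trans (semD_bounds T hwf ψ Δ (hwf _ _ _ hΔ)).1
          (le_csSup ⟨1, hub⟩ ⟨Δ, hΔ, rfl⟩)
      · exact ⟨le_refl 0, zero_le_one⟩

theorem semD_bounds (T : PLTS S A) (hwf : WellFormed T) :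
    ∀ (ψ : DF A) (Δ : S → ℝ), IsDist Δ → 0 ≤ semD T ψ Δ ∧ semD T ψ Δ ≤ 1
  | DF.sub ψ p, Δ, hΔ => by
      have h := semD_bounds T hwf ψ Δ hΔ
      simp only [semD]
      exact ⟨le_max_right _ _, max_le (by linarith [p.2.1, h.2]) (by norm_num)⟩
  | DF.and ψ₁ ψ₂, Δ, hΔ => by
      have h1 := semD_bounds T hwf ψ₁ Δ hΔ
      have h2 := semD_bounds T hwf ψ₂ Δ hΔ
      simp only [semD]
      exact ⟨le_min h1.1 h2.1, min_le_of_left_le h1.2⟩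
  | DF.box φ, Δ, hΔ => by
      simp only [semD]
      constructor
      · exact Finset.sum_nonneg fun s _ =>
          mul_nonneg (hΔ.1 s) (semS_bounds T hwf φ s).1
      · calc ∑ s, Δ s * semS T φ s ≤ ∑ s, Δ s * 1 :=
              Finset.sum_le_sum fun s _ =>
                mul_le_mul_of_nonneg_left (semS_bounds T hwf φ s).2 (hΔ.1 s)
          _ = 1 := by simp [hΔ.2]
end

/-- Finite conjunction. -/
def conjL : List (SF A) → SF A
  | [] => SF.top
  | φ :: l => SF.and φ (conjL l)

/-- Finite disjunction. -/
def disjL : List (SF A) → SF A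
  | [] => SF.neg SF.top
  | φ :: l => SF.neg (SF.and (SF.neg φ) (SF.neg (disjL l)))

theorem conjL_le (T : PLTS S A) {l : List (SF A)} {φ : SF A} (h : φ ∈ l) (u : S) :
    semS T (conjL l) u ≤ semS T φ u := by
  induction l with
  | nil => cases h
  | cons ψ l ih =>
    rcases List.mem_cons.mp h with rfl | h
    · simp only [conjL, semS]; exact min_le_left _ _
    · simp only [conjL, semS]; exact le_trans (min_le_right _ _) (ih h)

theorem le_conjL (T : PLTS S A) {l : List (SF A)} {r : ℝ} (u : S) (h1 : r ≤ 1)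
    (h : ∀ φ ∈ l, r ≤ semS T φ u) :
    r ≤ semS T (conjL l) u := by
  induction l with
  | nil => simpa [conjL, semS] using h1
  | cons ψ l ih =>
    simp only [conjL, semS]
    exact le_min (h ψ (by simp)) (ih fun φ hφ => h φ (by simp [hφ]))

theorem le_disjL (T : PLTS S A) {l : List (SF A)} {φ : SF A} (h : φ ∈ l) (u : S) :
    semS T φ u ≤ semS T (disjL l) u := by
  induction l with
  | nil => cases h
  | cons ψ l ih =>
    rcases List.mem_cons.mp h with rfl | h
    · simp only [disjL, semS]
      have := min_le_left (1 - semS T φ u) (1 - semS T (disjL l) u)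
      linarith
    · simp only [disjL, semS]
      have h2 := min_le_right (1 - semS T ψ u) (1 - semS T (disjL l) u)
      have := ih h
      linarith

theorem disjL_le (T : PLTS S A) {l : List (SF A)} {r : ℝ} (u : S) (h0 : 0 ≤ r)
    (h : ∀ φ ∈ l, semS T φ u ≤ r) :
    semS T (disjL l) u ≤ r := by
  induction l with
  | nil => simpa [disjL, semS] using h0
  | cons ψ l ih =>
    simp only [disjL, semS]
    have h1 := h ψ (by simp)
    have h2 := ih fun φ hφ => h φ (by simp [hφ])
    have : min (1 - semS T ψ u) (1 - semS T (disjL l) u) ≥ 1 - r :=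
      le_min (by linarith) (by linarith)
    linarith

theorem pairwise_formula (T : PLTS S A) (hwf : WellFormed T) (x : S → ℝ)
    (hx01 : ∀ u, 0 ≤ x u ∧ x u ≤ 1)
    (s t : S) (hst : x s - x t ≤ dLogic T s t) {ε : ℝ} (hε : 0 < ε) :
    ∃ ψ : SF A, semS T ψ s = x s ∧ semS T ψ t ≤ x t + ε := by
  -- get a formula with semS φ s - semS φ t ≥ x s - x t - ε
  have hne : {r | ∃ φ : SF A, r = |semS T φ s - semS T φ t|}.Nonempty :=
    ⟨_, SF.top, rfl⟩
  have hlt : x s - x t - ε < dLogic T s t := lt_of_lt_of_le (by linarith) hst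
  obtain ⟨r, ⟨φ₀, rfl⟩, hr⟩ := exists_lt_of_lt_csSup hne hlt
  have hφ : ∃ φ : SF A, x s - x t - ε ≤ semS T φ s - semS T φ t := by
    rcases abs_cases (semS T φ₀ s - semS T φ₀ t) with ⟨he, _⟩ | ⟨he, _⟩
    · exact ⟨φ₀, by linarith⟩
    · exact ⟨SF.neg φ₀, by simp only [semS]; linarith⟩
  obtain ⟨φ, hab⟩ := hφ
  have has := semS_bounds T hwf φ s
  have hat := semS_bounds T hwf φ t
  have hxs := hx01 s
  have hxt := hx01 t
  set a := semS T φ s with ha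
  set b := semS T φ t with hb
  rcases le_total (x s) a with hc | hc
  · -- c = a - x s, δ = 0
    refine ⟨SF.neg (SF.sub (SF.neg (SF.sub φ ⟨a - x s, by linarith, by linarith⟩))
      ⟨0, le_refl 0, zero_le_one⟩), ?_, ?_⟩
    · simp only [semS, ← ha]
      have h1 : max (a - (a - x s)) 0 = x s := by
        rw [show a - (a - x s) = x s by ring]; exact max_eq_left (by linarith)
      rw [h1]
      have h2 : max (1 - x s - 0) 0 = 1 - x s := by
        rw [sub_zero]; exact max_eq_left (by linarith)
      rw [h2]; ring
    · simp only [semS, ← hb]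
      have h1 : max (b - (a - x s)) 0 ≤ x t + ε :=
        max_le (by linarith) (by linarith)
      have := le_max_left (1 - max (b - (a - x s)) 0 - 0) 0
      linarith
  · -- c = 0, δ = x s - a
    refine ⟨SF.neg (SF.sub (SF.neg (SF.sub φ ⟨0, le_refl 0, zero_le_one⟩))
      ⟨x s - a, by linarith, by linarith⟩), ?_, ?_⟩
    · simp only [semS, ← ha]
      have h1 : max (a - 0) 0 = a := by
        rw [sub_zero]; exact max_eq_left (by linarith)
      rw [h1]
      have h2 : max (1 - a - (x s - a)) 0 = 1 - x s := by
        rw [show (1:ℝ) - a - (x s - a) = 1 - x s by ring]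
        exact max_eq_left (by linarith)
      rw [h2]; ring
    · simp only [semS, ← hb]
      have h1 : max (b - 0) 0 = b := by
        rw [sub_zero]; exact max_eq_left (by linarith)
      rw [h1]
      have := le_max_left (1 - b - (x s - a)) 0
      have : 1 - max (1 - b - (x s - a)) 0 ≤ b + (x s - a) := by
        have := le_max_left (1 - b - (x s - a)) 0
        linarith
      linarith

theorem exists_approx_formula (T : PLTS S A) (hwf : WellFormed T) (x : S → ℝ)
    (hx01 : ∀ u, 0 ≤ x u ∧ x u ≤ 1)
    (hxd : ∀ s t, x s - x t ≤ dLogic T s t) {ε : ℝ} (hε : 0 < ε) :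
    ∃ φ : SF A, ∀ u, x u ≤ semS T φ u ∧ semS T φ u ≤ x u + ε := by
  choose ψ hψ1 hψ2 using fun s t =>
    pairwise_formula T hwf x hx01 s t (hxd s t) hε
  set Φs : S → SF A := fun s => conjL ((Finset.univ.toList).map (ψ s)) with hΦs
  refine ⟨disjL ((Finset.univ.toList).map Φs), fun u => ⟨?_, ?_⟩⟩
  · have h1 : x u ≤ semS T (Φs u) u := by
      refine le_conjL T u (hx01 u).2 ?_
      rintro φ hφ
      rcases List.mem_map.mp hφ with ⟨t, _, rfl⟩
      exact le_of_eq (hψ1 u t).symm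
    exact le_trans h1 (le_disjL T
      (List.mem_map.mpr ⟨u, Finset.mem_toList.mpr (Finset.mem_univ u), rfl⟩) u)
  · refine disjL_le T u (by linarith [(hx01 u).1]) ?_
    rintro φ hφ
    rcases List.mem_map.mp hφ with ⟨s, _, rfl⟩
    exact le_trans (conjL_le T
      (List.mem_map.mpr ⟨u, Finset.mem_toList.mpr (Finset.mem_univ u), rfl⟩) u)
      (hψ2 s u)

end Aux

/-- The Kantorovich lifting (dual formulation) of the logical state metric is
dominated by the logical distribution metric. -/
theorem kantorovich_logic_le_dist_logic {S A : Type} [Fintype S] (T : PLTS S A)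
    (hwf : WellFormed T) (hfin : ImageFinite T)
    (Δ₁ Δ₂ : S → ℝ) (h₁ : IsDist Δ₁) (h₂ : IsDist Δ₂) :
    KanD (dLogic T) Δ₁ Δ₂ ≤ dDLogic T Δ₁ Δ₂ := by
  have hDDbdd : BddAbove {r | ∃ ψ : DF A, r = |semD T ψ Δ₁ - semD T ψ Δ₂|} := by
    refine ⟨1, ?_⟩
    rintro r ⟨ψ, rfl⟩
    have b1 := semD_bounds T hwf ψ Δ₁ h₁
    have b2 := semD_bounds T hwf ψ Δ₂ h₂
    rw [abs_le]; constructor <;> linarith [b1.1, b1.2, b2.1, b2.2]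
  have hDD0 : 0 ≤ dDLogic T Δ₁ Δ₂ := by
    have h0 : (0 : ℝ) ∈ {r | ∃ ψ : DF A, r = |semD T ψ Δ₁ - semD T ψ Δ₂|} := by
      refine ⟨DF.box SF.top, ?_⟩
      simp [semD, semS, h₁.2, h₂.2]
    exact le_csSup hDDbdd h0
  refine Real.sSup_le ?_ hDD0
  rintro r ⟨x, hx01, hxd, rfl⟩
  refine le_of_forall_pos_le_add fun ε hε => ?_
  obtain ⟨φ, hφ⟩ := exists_approx_formula T hwf x hx01 hxd hε
  have key : ∑ s, (Δ₁ s - Δ₂ s) * x s ≤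
      semD T (DF.box φ) Δ₁ - semD T (DF.box φ) Δ₂ + ε := by
    simp only [semD]
    have e1 : ∑ s, Δ₁ s * x s ≤ ∑ s, Δ₁ s * semS T φ s :=
      Finset.sum_le_sum fun s _ => mul_le_mul_of_nonneg_left (hφ s).1 (h₁.1 s)
    have e2 : ∑ s, Δ₂ s * semS T φ s ≤ ∑ s, Δ₂ s * x s + ε := by
      calc ∑ s, Δ₂ s * semS T φ s ≤ ∑ s, Δ₂ s * (x s + ε) :=
            Finset.sum_le_sum fun s _ =>
              mul_le_mul_of_nonneg_left (hφ s).2 (h₂.1 s)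
        _ = ∑ s, Δ₂ s * x s + ε := by
            simp [mul_add, Finset.sum_add_distrib, ← Finset.sum_mul, h₂.2]
    have : ∑ s, (Δ₁ s - Δ₂ s) * x s = ∑ s, Δ₁ s * x s - ∑ s, Δ₂ s * x s := by
      simp [sub_mul, Finset.sum_sub_distrib]
    linarith
  have hmem : |semD T (DF.box φ) Δ₁ - semD T (DF.box φ) Δ₂| ∈
      {r | ∃ ψ : DF A, r = |semD T ψ Δ₁ - semD T ψ Δ₂|} := ⟨DF.box φ, rfl⟩
  have := le_csSup hDDbdd hmem
  have habs := le_abs_self (semD T (DF.box φ) Δ₁ - semD T (DF.box φ) Δ₂)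
  calc ∑ s, (Δ₁ s - Δ₂ s) * x s ≤ _ + ε := key
    _ ≤ dDLogic T Δ₁ Δ₂ + ε := by unfold dDLogic; linarith
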